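/- Let f and g be nonflat smooth functions on a neighborhood of the origin in ℝⁿ with f(0) = 0. Then: (i) for every d > 0, the inclusion d·(Γ₊(g)+𝟏) ⊆ Γ₊(f) holds if and only if d·(l_g(a) + ⟨a,𝟏⟩) ≥ l_f(a) for all a ∈ ℝ₊ⁿ; and (ii) sup{−(l_g(a)+⟨a,𝟏⟩)/l_f(a) : a ∈ ℝ₊ⁿ, l_f(a) ≠ 0} = −1/d(f,g), and this supremum is attained. -/

import Mathlib

open Filter Topology MeasureTheory Set

/-- The partial derivative `∂f/∂xᵢ`. -/
noncomputable def pd {n : ℕ} (i : Fin n) (f : (Fin n → ℝ) → ℝ) : (Fin n → ℝ) → ℝ :=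
  fun x => fderiv ℝ f x (Pi.single i 1)

/-- The iterated partial derivative `∂^α f` for a multi-index `α`. -/
noncomputable def mderiv {n : ℕ} (α : Fin n → ℕ) (f : (Fin n → ℝ) → ℝ) : (Fin n → ℝ) → ℝ :=
  (List.finRange n).foldr (fun i g => (pd i)^[α i] g) f

/-- The Newton support: multi-indices with nonzero Taylor coefficient at the origin. -/
def NewtonSupp {n : ℕ} (f : (Fin n → ℝ) → ℝ) : Set (Fin n → ℕ) :=
  {α | mderiv α f 0 ≠ 0}

/-- The Newton polyhedron `Γ₊(f)`. -/
noncomputable def NPoly {n : ℕ} (f : (Fin n → ℝ) → ℝ) : Set (Fin n → ℝ) :=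
  convexHull ℝ {x | ∃ α ∈ NewtonSupp f, ∀ i, (α i : ℝ) ≤ x i}

/-- `l_f(a) = min{⟨a,α⟩ : α ∈ Γ₊(f)}`. -/
noncomputable def lfun {n : ℕ} (f : (Fin n → ℝ) → ℝ) (a : Fin n → ℝ) : ℝ :=
  sInf {r | ∃ x ∈ NPoly f, r = ∑ i, a i * x i}

/-- A face of a polyhedron `P`: a set of the form `P ∩ H(a,l)` for a valid pair `(a,l)`. -/
def IsFace {n : ℕ} (P F : Set (Fin n → ℝ)) : Prop :=
  ∃ (a : Fin n → ℝ) (l : ℝ), (∀ x ∈ P, l ≤ ∑ i, a i * x i) ∧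
    F = {x ∈ P | ∑ i, a i * x i = l}

/-- The Taylor coefficient `c_α = ∂^α f(0)/α!`. -/
noncomputable def taylorCoeff {n : ℕ} (f : (Fin n → ℝ) → ℝ) (α : Fin n → ℕ) : ℝ :=
  mderiv α f 0 / ((∏ i, Nat.factorial (α i) : ℕ) : ℝ)

open Classical in
/-- The `γ`-part of `f`, as a polynomial: `f_γ(x) = ∑_{α ∈ γ ∩ ℤ₊ⁿ} c_α x^α`. -/
noncomputable def gammaPart {n : ℕ} (f : (Fin n → ℝ) → ℝ) (γ : Set (Fin n → ℝ)) :
    (Fin n → ℝ) → ℝ :=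
  fun x => ∑ᶠ α : Fin n → ℕ,
    if (fun i => (α i : ℝ)) ∈ γ then taylorCoeff f α * ∏ i, x i ^ α i else 0

/-- Nondegeneracy over `ℝ` with respect to the Newton polyhedron: for every nonempty
compact face `γ` of `Γ₊(f)`, the gradient of `f_γ` does not vanish on `(ℝ∖{0})ⁿ`. -/
def Nondeg {n : ℕ} (f : (Fin n → ℝ) → ℝ) : Prop :=
  ∀ γ : Set (Fin n → ℝ), IsFace (NPoly f) γ → γ.Nonempty → IsCompact γ →
    ∀ x : Fin n → ℝ, (∀ i, x i ≠ 0) → ∃ i, pd i (gammaPart f γ) x ≠ 0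

/-- The class `Ê(U)`: for every valid pair `(a,l) ∈ ℤ₊ⁿ × ℤ₊` of the Newton
polyhedron of `f`, the limit defining the corresponding `γ`-part exists on a
neighborhood of the origin. -/
def IsEhat {n : ℕ} (U : Set (Fin n → ℝ)) (f : (Fin n → ℝ) → ℝ) : Prop :=
  ∀ (a : Fin n → ℕ) (l : ℕ),
    (∀ x ∈ NPoly f, (l : ℝ) ≤ ∑ i, (a i : ℝ) * x i) →
    ∃ W ∈ 𝓝 (0 : Fin n → ℝ), W ⊆ U ∧ ∀ x ∈ W, ∃ L : ℝ,
      Tendsto (fun t : ℝ => f (fun i => t ^ (a i) * x i) / t ^ l)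
        (𝓝[>] (0:ℝ)) (𝓝 L)

/-- The Newton distance `d(f,g) = min{d > 0 : d(Γ₊(g)+𝟏) ⊆ Γ₊(f)}`. -/
noncomputable def ndist {n : ℕ} (f g : (Fin n → ℝ) → ℝ) : ℝ :=
  sInf {d | 0 < d ∧ ∀ β ∈ NPoly g, (fun i => d * (β i + 1)) ∈ NPoly f}

/-- The Newton distance `d(f,xᵖ) = min{d > 0 : d(p+𝟏) ∈ Γ₊(f)}`. -/
noncomputable def ndistP {n : ℕ} (f : (Fin n → ℝ) → ℝ) (p : Fin n → ℕ) : ℝ :=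
  sInf {d | 0 < d ∧ (fun i => d * ((p i : ℝ) + 1)) ∈ NPoly f}

/-- The smallest face `τ_P(α)` of `P` containing `α`. -/
noncomputable def sFace {n : ℕ} (P : Set (Fin n → ℝ)) (α : Fin n → ℝ) : Set (Fin n → ℝ) :=
  ⋂₀ {F | IsFace P F ∧ α ∈ F}

/-- Dimension of (the affine hull of) a subset of `ℝⁿ`. -/
noncomputable def sdim {n : ℕ} (F : Set (Fin n → ℝ)) : ℕ :=
  Module.finrank ℝ (vectorSpan ℝ F)

/-- `Γ₀(f) = ∂Γ₊(f) ∩ d(f,g)·(Γ₊(g)+𝟏)`. -/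
noncomputable def Gamma0 {n : ℕ} (f g : (Fin n → ℝ) → ℝ) : Set (Fin n → ℝ) :=
  frontier (NPoly f) ∩ {x | ∃ β ∈ NPoly g, x = fun i => ndist f g * (β i + 1)}

/-- The Newton multiplicity `m(f,g) = max{n - dim τ_f(α) : α ∈ Γ₀(f)}`. -/
noncomputable def nmult {n : ℕ} (f g : (Fin n → ℝ) → ℝ) : ℕ :=
  sSup {k | ∃ α ∈ Gamma0 f g, k = n - sdim (sFace (NPoly f) α)}

/-- The Newton multiplicity `m(f,xᵖ) = n - dim τ_f(q)`, `q = d(f,xᵖ)(p+𝟏)`. -/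
noncomputable def nmultP {n : ℕ} (f : (Fin n → ℝ) → ℝ) (p : Fin n → ℕ) : ℕ :=
  n - sdim (sFace (NPoly f) (fun i => ndistP f p * ((p i : ℝ) + 1)))

/-- `f` is convenient: `Γ₊(f)` meets every coordinate axis. -/
def Convenient {n : ℕ} (f : (Fin n → ℝ) → ℝ) : Prop :=
  ∀ i : Fin n, ∃ c : ℝ, (fun j => if j = i then c else 0) ∈ NPoly f

/-- The `γ`-part of `f ∈ Ê(U)` for the face cut out by a valid pair `(a,l)`, defined
as a limit. -/
noncomputable def gpart {n : ℕ} (f : (Fin n → ℝ) → ℝ) (a : Fin n → ℕ) (l : ℕ)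
    (x : Fin n → ℝ) : ℝ :=
  limUnder (𝓝[>] (0:ℝ)) (fun t : ℝ => f (fun i => t ^ (a i) * x i) / t ^ l)

/-!
By Dickson's lemma the exponents of `f` have finitely many minimal elements `V`, so
`Γ₊(f) = conv V + ℝ₊ⁿ`: it is closed, and on `ℝ₊ⁿ` the function `l_f` is a minimum of finitely
many linear forms, hence continuous. Separating a point from the closed convex upper set `Γ₊(f)`
gives a hyperplane with nonnegative normal, so `x ∈ Γ₊(f)` iff `l_f(a) ≤ ⟨a,x⟩` for all
`a ∈ ℝ₊ⁿ`; applied to `x = d(β + 𝟏)` this is (i).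

For (ii), the ratio `l_f(a) / (l_g(a) + ⟨a,𝟏⟩)` is homogeneous of degree zero, so its supremum
over `ℝ₊ⁿ ∖ {0}` is a maximum `M` attained on the compact standard simplex. By (i) the admissible
`d` are exactly those `≥ M`, so `d(f,g) = M`; and `M > 0` because `f(0) = 0` forces `l_f(𝟏) ≥ 1`.
-/
open Matrix Set
open scoped Pointwise

theorem WellQuasiOrderedLE.exists_finset_forall_exists_le {α : Type*} [PartialOrder α]
    [WellQuasiOrderedLE α] (s : Set α) :
    ∃ t : Finset α, ↑t ⊆ s ∧ ∀ x ∈ s, ∃ y ∈ t, y ≤ x := by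
  have hfin : {x | Minimal (· ∈ s) x}.Finite :=
    WellQuasiOrderedLE.finite_of_isAntichain (setOfPred_minimal_antichain _)
  refine ⟨hfin.toFinset, fun y hy => (hfin.mem_toFinset.1 hy).prop, fun x hx => ?_⟩
  obtain ⟨y, hyx, hy⟩ := exists_minimal_le_of_wellFoundedLT (· ∈ s) x hx
  exact ⟨y, hfin.mem_toFinset.2 hy, hyx⟩

theorem StrongDual.exists_eq_dotProduct {ι : Type*} [Fintype ι]
    (φ : StrongDual ℝ (ι → ℝ)) : ∃ a : ι → ℝ, ∀ y, φ y = a ⬝ᵥ y := by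
  classical
  refine ⟨fun i => φ (Pi.single i 1), fun y => ?_⟩
  conv_lhs => rw [pi_eq_sum_univ' y]
  simp [dotProduct, mul_comm]

theorem IsUpperSet.exists_nonneg_dotProduct_lt {ι : Type*} [Fintype ι] {P : Set (ι → ℝ)}
    (hup : IsUpperSet P) (hconv : Convex ℝ P) (hcl : IsClosed P) (hne : P.Nonempty)
    {x : ι → ℝ} (hx : x ∉ P) :
    ∃ a, 0 ≤ a ∧ ∃ u, a ⬝ᵥ x < u ∧ ∀ p ∈ P, u < a ⬝ᵥ p := by
  classical
  obtain ⟨φ, u, hφx, hφP⟩ := geometric_hahn_banach_point_closed hconv hcl hx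
  obtain ⟨a, hφ⟩ := φ.exists_eq_dotProduct
  simp only [hφ] at hφx hφP
  refine ⟨a, fun i => ?_, u, hφx, hφP⟩
  by_contra! hai
  replace hai : a i < 0 := hai
  obtain ⟨p, hp⟩ := hne
  -- moving `p` far enough in the direction `eᵢ` brings `a ⬝ᵥ p` down to `u`
  obtain ⟨t, ht, hat⟩ : ∃ t, 0 ≤ t ∧ a i * t = u - a ⬝ᵥ p :=
    ⟨(u - a ⬝ᵥ p) / a i, div_nonneg_of_nonpos (by linarith [hφP p hp]) hai.le,
      mul_div_cancel₀ _ hai.ne⟩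
  have := hφP _ (hup (le_add_of_nonneg_right (Pi.single_nonneg.2 ht : 0 ≤ Pi.single i t)) hp)
  rw [dotProduct_add, dotProduct_single, hat] at this
  linarith

theorem convex_setOf_le_dotProduct {ι : Type*} [Fintype ι] (a : ι → ℝ) (m : ℝ) :
    Convex ℝ {y | m ≤ a ⬝ᵥ y} :=
  convex_halfSpace_ge (dotProductBilin ℝ ℝ a).isLinear m

section NewtonPolyhedron

variable {n : ℕ} {f : (Fin n → ℝ) → ℝ}

theorem mderiv_zero (f : (Fin n → ℝ) → ℝ) : mderiv 0 f = f := by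
  simp [mderiv]

theorem npoly_subset_Ici_zero (f : (Fin n → ℝ) → ℝ) : NPoly f ⊆ Ici 0 :=
  convexHull_min (fun _ ⟨_, _, hαx⟩ i => (Nat.cast_nonneg _).trans (hαx i)) (convex_Ici 0)

theorem exists_finset_npoly_eq (f : (Fin n → ℝ) → ℝ) :
    ∃ V : Finset (Fin n → ℕ), ↑V ⊆ NewtonSupp f ∧
      NPoly f =
        convexHull ℝ ((fun v i => (v i : ℝ)) '' (V : Set (Fin n → ℕ))) + Ici (0 : Fin n → ℝ) := by
  obtain ⟨V, hVS, hcov⟩ := WellQuasiOrderedLE.exists_finset_forall_exists_le (NewtonSupp f)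
  refine ⟨V, hVS, ?_⟩
  have hgen : {x | ∃ α ∈ NewtonSupp f, ∀ i, (α i : ℝ) ≤ x i} =
      (fun v i => (v i : ℝ)) '' (V : Set (Fin n → ℕ)) + Ici (0 : Fin n → ℝ) := by
    ext x
    constructor
    · rintro ⟨α, hα, hαx⟩
      obtain ⟨v, hv, hvα⟩ := hcov α hα
      exact ⟨_, ⟨v, hv, rfl⟩, x - fun i => (v i : ℝ),
        mem_Ici.2 <| sub_nonneg.2 fun i => (Nat.cast_le.2 (hvα i)).trans (hαx i),
        add_sub_cancel _ _⟩
    · rintro ⟨_, ⟨v, hv, rfl⟩, c, hc, rfl⟩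
      exact ⟨v, hVS hv, fun i => le_add_of_nonneg_right (hc i)⟩
  rw [NPoly, hgen, convexHull_add, (convex_Ici 0).convexHull_eq]

theorem isClosed_npoly (f : (Fin n → ℝ) → ℝ) : IsClosed (NPoly f) := by
  obtain ⟨V, -, hV⟩ := exists_finset_npoly_eq f
  rw [hV]
  exact isClosed_Ici.add_left_of_isCompact
    ((V.finite_toSet.image _).isCompact_convexHull (𝕜 := ℝ))

theorem isUpperSet_npoly (f : (Fin n → ℝ) → ℝ) : IsUpperSet (NPoly f) := by
  obtain ⟨V, -, hV⟩ := exists_finset_npoly_eq f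
  rw [hV]
  rintro _ y hle ⟨q, hq, c, hc, rfl⟩
  exact ⟨q, hq, y - q, sub_nonneg.2 ((le_add_of_nonneg_right hc).trans hle), add_sub_cancel _ _⟩

theorem lfun_le_dotProduct {a x : Fin n → ℝ} (ha : 0 ≤ a) (hx : x ∈ NPoly f) :
    lfun f a ≤ a ⬝ᵥ x :=
  csInf_le ⟨0, by
    rintro _ ⟨y, hy, rfl⟩
    exact dotProduct_nonneg_of_nonneg ha (npoly_subset_Ici_zero f hy)⟩ ⟨x, hx, rfl⟩

theorem lfun_nonneg (f : (Fin n → ℝ) → ℝ) {a : Fin n → ℝ} (ha : 0 ≤ a) : 0 ≤ lfun f a :=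
  Real.sInf_nonneg (by
    rintro _ ⟨y, hy, rfl⟩
    exact dotProduct_nonneg_of_nonneg ha (npoly_subset_Ici_zero f hy))

theorem lfun_smul (f : (Fin n → ℝ) → ℝ) {c : ℝ} (hc : 0 ≤ c) (a : Fin n → ℝ) :
    lfun f (c • a) = c * lfun f a := by
  have hscale :
      {r | ∃ x ∈ NPoly f, r = (c • a) ⬝ᵥ x} = c • {r | ∃ x ∈ NPoly f, r = a ⬝ᵥ x} := by
    ext r
    simp only [mem_smul_set, mem_ofPred_eq, smul_dotProduct, smul_eq_mul]
    constructor
    · rintro ⟨x, hx, rfl⟩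
      exact ⟨_, ⟨x, hx, rfl⟩, rfl⟩
    · rintro ⟨_, ⟨x, hx, rfl⟩, rfl⟩
      exact ⟨x, hx, rfl⟩
  exact (congrArg sInf hscale).trans (Real.sInf_smul_of_nonneg hc _)

theorem mem_npoly_iff (hfn : (NPoly f).Nonempty) {x : Fin n → ℝ} :
    x ∈ NPoly f ↔ ∀ a, 0 ≤ a → lfun f a ≤ a ⬝ᵥ x := by
  refine ⟨fun hx a ha => lfun_le_dotProduct ha hx, fun h => ?_⟩
  by_contra hx
  obtain ⟨a, ha, u, hxu, hu⟩ := (isUpperSet_npoly f).exists_nonneg_dotProduct_lt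
    (convex_convexHull ℝ _) (isClosed_npoly f) hfn hx
  obtain ⟨p, hp⟩ := hfn
  have : u ≤ lfun f a := le_csInf ⟨_, p, hp, rfl⟩ (by rintro _ ⟨y, hy, rfl⟩; exact (hu y hy).le)
  linarith [h a ha]

theorem exists_finset_lfun_eq (hfn : (NPoly f).Nonempty) :
    ∃ (V : Finset (Fin n → ℕ)) (hV : V.Nonempty),
      ∀ a, 0 ≤ a → lfun f a = V.inf' hV fun v => a ⬝ᵥ fun i => (v i : ℝ) := by
  obtain ⟨V, hVS, hV⟩ := exists_finset_npoly_eq f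
  have hVne : V.Nonempty := by
    rw [Finset.nonempty_iff_ne_empty]
    rintro rfl
    simp [hV] at hfn
  refine ⟨V, hVne, fun a ha => le_antisymm ?_ ?_⟩
  · obtain ⟨v, hv, hmin⟩ := V.exists_mem_eq_inf' hVne fun v => a ⬝ᵥ fun i => (v i : ℝ)
    rw [hmin]
    exact lfun_le_dotProduct ha (subset_convexHull ℝ _ ⟨v, hVS hv, fun i => le_rfl⟩)
  · obtain ⟨p, hp⟩ := hfn
    refine le_csInf ⟨_, p, hp, rfl⟩ ?_
    rintro _ ⟨x, hx, rfl⟩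
    rw [hV] at hx
    obtain ⟨q, hq, c, hc, rfl⟩ := hx
    have hq' : q ∈ {y | (V.inf' hVne fun v => a ⬝ᵥ fun i => (v i : ℝ)) ≤ a ⬝ᵥ y} := by
      refine convexHull_min ?_ (convex_setOf_le_dotProduct a _) hq
      rintro _ ⟨v, hv, rfl⟩
      exact V.inf'_le (fun v => a ⬝ᵥ fun i => (v i : ℝ)) hv
    change _ ≤ a ⬝ᵥ (q + c)
    rw [dotProduct_add]
    linarith [dotProduct_nonneg_of_nonneg ha hc, hq'.out]

theorem continuousOn_lfun (hfn : (NPoly f).Nonempty) : ContinuousOn (lfun f) (Ici 0) := by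
  obtain ⟨V, hV, hlfun⟩ := exists_finset_lfun_eq hfn
  refine ContinuousOn.congr ?_ fun a ha => hlfun a ha
  exact (Continuous.finset_inf'_apply hV fun v _ =>
    continuous_id.dotProduct continuous_const).continuousOn

theorem one_le_lfun_one (hfn : (NPoly f).Nonempty) (hf0 : f 0 = 0) : 1 ≤ lfun f 1 := by
  obtain ⟨p, hp⟩ := hfn
  refine le_csInf ⟨_, p, hp, rfl⟩ ?_
  rintro _ ⟨x, hx, rfl⟩
  refine convexHull_min ?_ (convex_setOf_le_dotProduct 1 1) hx
  rintro x ⟨α, hα, hαx⟩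
  obtain ⟨i, hi⟩ : ∃ i, α i ≠ 0 := by
    by_contra! h
    apply hα
    rw [show α = 0 from funext h, mderiv_zero, hf0]
  calc (1 : ℝ) ≤ α i := by exact_mod_cast Nat.one_le_iff_ne_zero.2 hi
    _ ≤ x i := hαx i
    _ ≤ 1 ⬝ᵥ x := by
      rw [one_dotProduct]
      exact Finset.single_le_sum (fun j _ => (Nat.cast_nonneg _).trans (hαx j))
        (Finset.mem_univ i)

end NewtonPolyhedron

section NewtonDistance

variable {n : ℕ} {f g : (Fin n → ℝ) → ℝ}

theorem forall_smul_add_one_mem_npoly_iff (hfn : (NPoly f).Nonempty) (hgn : (NPoly g).Nonempty)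
    {d : ℝ} (hd : 0 < d) :
    (∀ β ∈ NPoly g, (fun i => d * (β i + 1)) ∈ NPoly f) ↔
      ∀ a : Fin n → ℝ, 0 ≤ a → lfun f a ≤ d * (lfun g a + ∑ i, a i) := by
  have hdot (a β : Fin n → ℝ) : a ⬝ᵥ (fun i => d * (β i + 1)) = d * (a ⬝ᵥ β + ∑ i, a i) := by
    change a ⬝ᵥ (d • (β + 1)) = _
    rw [dotProduct_smul, dotProduct_add, dotProduct_one, smul_eq_mul]
  constructor
  · intro hincl a ha
    obtain ⟨β₀, hβ₀⟩ := hgn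
    have hlow : lfun f a / d - ∑ i, a i ≤ lfun g a := by
      refine le_csInf ⟨_, β₀, hβ₀, rfl⟩ ?_
      rintro _ ⟨β, hβ, rfl⟩
      have := lfun_le_dotProduct ha (hincl β hβ)
      rw [hdot] at this
      exact sub_le_iff_le_add.2 ((div_le_iff₀' hd).2 this)
    exact (div_le_iff₀' hd).1 (sub_le_iff_le_add.1 hlow)
  · intro hineq β hβ
    refine (mem_npoly_iff hfn).2 fun a ha => ?_
    rw [hdot]
    calc lfun f a ≤ d * (lfun g a + ∑ i, a i) := hineq a ha
      _ ≤ d * (a ⬝ᵥ β + ∑ i, a i) := by gcongr; exact lfun_le_dotProduct ha hβ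

theorem exists_lfun_ratio_max_on_stdSimplex (hn : 1 ≤ n) (hfn : (NPoly f).Nonempty)
    (hgn : (NPoly g).Nonempty) :
    ∃ a₀ ∈ stdSimplex ℝ (Fin n), ∀ a : Fin n → ℝ, 0 ≤ a →
      lfun f a * (lfun g a₀ + ∑ i, a₀ i) ≤ lfun f a₀ * (lfun g a + ∑ i, a i) := by
  have : Nonempty (Fin n) := ⟨⟨0, hn⟩⟩
  have hK (a) (ha : a ∈ stdSimplex ℝ (Fin n)) : 0 < lfun g a + ∑ i, a i := by
    rw [ha.2]
    linarith [lfun_nonneg g ha.1]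
  have hcont : ContinuousOn (fun a => lfun f a / (lfun g a + ∑ i, a i)) (stdSimplex ℝ (Fin n)) :=
    ((continuousOn_lfun hfn).mono fun a ha => ha.1).div
      (((continuousOn_lfun hgn).mono fun a ha => ha.1).add (by fun_prop))
      fun a ha => (hK a ha).ne'
  obtain ⟨a₀, ha₀, hmax⟩ := (isCompact_stdSimplex ℝ (Fin n)).exists_isMaxOn
    (Set.nonempty_coe_sort.1 inferInstance) hcont
  refine ⟨a₀, ha₀, fun a ha => ?_⟩
  rcases (Finset.sum_nonneg fun i _ => ha i).eq_or_lt with hs | hs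
  · obtain rfl : a = 0 := funext fun i =>
      (Finset.sum_eq_zero_iff_of_nonneg fun i _ => ha i).1 hs.symm i (Finset.mem_univ i)
    have hf0 : lfun f 0 = 0 := by simpa using lfun_smul f le_rfl 0
    have hg0 : 0 ≤ lfun g 0 + ∑ i, (0 : Fin n → ℝ) i := by simpa using lfun_nonneg g le_rfl
    rw [hf0, zero_mul]
    exact mul_nonneg (lfun_nonneg f ha₀.1) hg0
  -- both sides are homogeneous of degree one in `a`, so it suffices to take `a` in the simplex
  set s := ∑ i, a i
  set b := s⁻¹ • a
  have hb : b ∈ stdSimplex ℝ (Fin n) :=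
    ⟨smul_nonneg (inv_nonneg.2 hs.le) ha,
      by simp [b, ← Finset.mul_sum, inv_mul_cancel₀ hs.ne', s]⟩
  have hab : a = s • b := by simp [b, smul_smul, hs.ne']
  have := hmax hb
  simp only [mem_ofPred_eq, div_le_div_iff₀ (hK b hb) (hK a₀ ha₀)] at this
  rw [hab, lfun_smul f hs.le, lfun_smul g hs.le]
  have := mul_le_mul_of_nonneg_left this hs.le
  rw [hb.2] at this
  linarith

theorem ndist_eq_of_lfun_ratio_max (hfn : (NPoly f).Nonempty) (hgn : (NPoly g).Nonempty)
    {a₀ : Fin n → ℝ} (ha₀ : 0 ≤ a₀) (hf₀ : 0 < lfun f a₀) (hg₀ : 0 < lfun g a₀ + ∑ i, a₀ i)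
    (hmax : ∀ a : Fin n → ℝ, 0 ≤ a →
      lfun f a * (lfun g a₀ + ∑ i, a₀ i) ≤ lfun f a₀ * (lfun g a + ∑ i, a i)) :
    ndist f g = lfun f a₀ / (lfun g a₀ + ∑ i, a₀ i) := by
  have hd₀ := div_pos hf₀ hg₀
  refine IsLeast.csInf_eq
    ⟨⟨hd₀, (forall_smul_add_one_mem_npoly_iff hfn hgn hd₀).2 fun a ha => ?_⟩,
      fun d ⟨hd, hincl⟩ => ?_⟩
  · rw [div_mul_eq_mul_div, le_div_iff₀ hg₀]
    linarith [hmax a ha]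
  · rw [div_le_iff₀ hg₀]
    exact (forall_smul_add_one_mem_npoly_iff hfn hgn hd).1 hincl a₀ ha₀

end NewtonDistance

theorem stmt11_general (n : ℕ) (hn : 1 ≤ n)
    (f g : (Fin n → ℝ) → ℝ)
    (hfn : (NPoly f).Nonempty) (hgn : (NPoly g).Nonempty) (hf0 : f 0 = 0) :
    (∀ d : ℝ, 0 < d →
      ((∀ β ∈ NPoly g, (fun i => d * (β i + 1)) ∈ NPoly f) ↔
        ∀ a : Fin n → ℝ, (∀ i, 0 ≤ a i) → lfun f a ≤ d * (lfun g a + ∑ i, a i))) ∧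
    IsGreatest {r : ℝ | ∃ a : Fin n → ℝ, (∀ i, 0 ≤ a i) ∧ lfun f a ≠ 0 ∧
      r = -((lfun g a + ∑ i, a i) / lfun f a)} (-(1 / ndist f g)) := by
  obtain ⟨a₀, ha₀, hmax⟩ := exists_lfun_ratio_max_on_stdSimplex hn hfn hgn
  have hg₀ : 0 < lfun g a₀ + ∑ i, a₀ i := by
    rw [ha₀.2]
    linarith [lfun_nonneg g ha₀.1]
  -- compare `a₀` with `𝟏`, where `l_f(𝟏) ≥ 1` because `0 ∉ supp f`
  have hf₀ : 0 < lfun f a₀ := by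
    refine (lfun_nonneg f ha₀.1).lt_of_ne fun h => ?_
    have h1 := hmax 1 zero_le_one
    rw [← h, zero_mul] at h1
    linarith [mul_pos (one_pos.trans_le (one_le_lfun_one hfn hf0)) hg₀]
  have hndist := ndist_eq_of_lfun_ratio_max hfn hgn ha₀.1 hf₀ hg₀ hmax
  refine ⟨fun d hd => forall_smul_add_one_mem_npoly_iff hfn hgn hd,
    ⟨a₀, ha₀.1, hf₀.ne', by rw [hndist, one_div_div]⟩, ?_⟩
  rintro _ ⟨a, ha, hfa, rfl⟩
  have hfa' : 0 < lfun f a := (lfun_nonneg f ha).lt_of_ne' hfa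
  rw [hndist, one_div_div, neg_le_neg_iff, div_le_div_iff₀ hf₀ hfa']
  linarith [hmax a ha]

/-- (i) `d·(Γ₊(g)+𝟏) ⊆ Γ₊(f)` iff `d(l_g(a)+⟨a,𝟏⟩) ≥ l_f(a)` for all
`a ∈ ℝ₊ⁿ`; (ii) `sup{-(l_g(a)+⟨a,𝟏⟩)/l_f(a) : a ∈ ℝ₊ⁿ, l_f(a) ≠ 0} = -1/d(f,g)`, the
supremum being attained. -/
theorem stmt11 (n : ℕ) (hn : 1 ≤ n) (U : Set (Fin n → ℝ)) (hU : IsOpen U)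
    (h0 : (0 : Fin n → ℝ) ∈ U)
    (f g : (Fin n → ℝ) → ℝ)
    (hfs : ContDiffOn ℝ (⊤ : ℕ∞) f U) (hgs : ContDiffOn ℝ (⊤ : ℕ∞) g U)
    (hfn : (NPoly f).Nonempty) (hgn : (NPoly g).Nonempty) (hf0 : f 0 = 0) :
    (∀ d : ℝ, 0 < d →
      ((∀ β ∈ NPoly g, (fun i => d * (β i + 1)) ∈ NPoly f) ↔
        ∀ a : Fin n → ℝ, (∀ i, 0 ≤ a i) → lfun f a ≤ d * (lfun g a + ∑ i, a i))) ∧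
    IsGreatest {r : ℝ | ∃ a : Fin n → ℝ, (∀ i, 0 ≤ a i) ∧ lfun f a ≠ 0 ∧
      r = -((lfun g a + ∑ i, a i) / lfun f a)} (-(1 / ndist f g)) :=
  stmt11_general n hn f g hfn hgn hf0
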